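/- Mutual information decomposition for conditionally independent observations: let X, Y1, Y2 be finitely-valued random variables with Y1 and Y2 conditionally independent given X, and let F1 = g1(Y1) and F2 = g2(Y2) for deterministic functions g1, g2. Then I(Y1,Y2; F1,F2) = I(X; F1,F2) + I(F1; Y1 | X) + I(F2; Y2 | X), and I(Y1; F1 | F2) = I(X; F1 | F2) + I(F1; Y1 | X). -/
import Mathlib


open scoped BigOperators Classical

noncomputable section

/-- Probability that the random variable `A` takes the value `a` under the pmf `p`. -/
def pr {Ω α : Type*} [Fintype Ω] (p : Ω → ℝ) (A : Ω → α) (a : α) : ℝ :=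
  ∑ ω, if A ω = a then p ω else 0

/-- Shannon entropy (base 2) of the random variable `A` under the pmf `p`. -/
def ent {Ω α : Type*} [Fintype Ω] [Fintype α] (p : Ω → ℝ) (A : Ω → α) : ℝ :=
  -∑ a, pr p A a * Real.logb 2 (pr p A a)

/-- Conditional Shannon entropy `H(A | B)` (base 2). -/
def condEnt {Ω α β : Type*} [Fintype Ω] [Fintype α] [Fintype β]
    (p : Ω → ℝ) (A : Ω → α) (B : Ω → β) : ℝ :=
  ent p (fun ω => (A ω, B ω)) - ent p B

/-- Mutual information `I(A ; B)` (base 2). -/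
def mutInfo {Ω α β : Type*} [Fintype Ω] [Fintype α] [Fintype β]
    (p : Ω → ℝ) (A : Ω → α) (B : Ω → β) : ℝ :=
  ent p A + ent p B - ent p (fun ω => (A ω, B ω))

/-- Conditional mutual information `I(A ; B | C)` (base 2). -/
def condMutInfo {Ω α β γ : Type*} [Fintype Ω] [Fintype α] [Fintype β] [Fintype γ]
    (p : Ω → ℝ) (A : Ω → α) (B : Ω → β) (C : Ω → γ) : ℝ :=
  ent p (fun ω => (A ω, C ω)) + ent p (fun ω => (B ω, C ω))
    - ent p (fun ω => (A ω, B ω, C ω)) - ent p C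

/-- `p` is a probability mass function on the finite type `Ω`. -/
def IsPmf {Ω : Type*} [Fintype Ω] (p : Ω → ℝ) : Prop :=
  (∀ ω, 0 ≤ p ω) ∧ (∑ ω, p ω) = 1

/-- `k` is a transition kernel: each `k q y` is a pmf on `U`. -/
def IsKernel {Q Y U : Type*} [Fintype U] (k : Q → Y → U → ℝ) : Prop :=
  (∀ q y u, 0 ≤ k q y u) ∧ ∀ q y, (∑ u, k q y u) = 1

/-- Independence of the random variables `A` and `B` under `p`. -/
def Indep {Ω α β : Type*} [Fintype Ω] (p : Ω → ℝ) (A : Ω → α) (B : Ω → β) : Prop :=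
  ∀ a b, pr p (fun ω => (A ω, B ω)) (a, b) = pr p A a * pr p B b

/-- Conditional independence of `A` and `B` given `C` under `p`
(stated in a division-free form). -/
def CondIndep {Ω α β γ : Type*} [Fintype Ω] (p : Ω → ℝ) (A : Ω → α) (B : Ω → β)
    (C : Ω → γ) : Prop :=
  ∀ a b c, pr p (fun ω => (A ω, B ω, C ω)) (a, b, c) * pr p C c =
    pr p (fun ω => (A ω, C ω)) (a, c) * pr p (fun ω => (B ω, C ω)) (b, c)

/-- The joint pmf `p(q) p(y1,y2) p(u1|y1,q) p(u2|y2,q)` on `Q × Y1 × Y2 × U1 × U2`. -/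
def jointW {Y1 Y2 Q U1 U2 : Type*} (src : Y1 × Y2 → ℝ) (pq : Q → ℝ)
    (k1 : Q → Y1 → U1 → ℝ) (k2 : Q → Y2 → U2 → ℝ) : Q × Y1 × Y2 × U1 × U2 → ℝ :=
  fun z => pq z.1 * src (z.2.1, z.2.2.1) * k1 z.1 z.2.1 z.2.2.2.1 * k2 z.1 z.2.2.1 z.2.2.2.2

/-- The joint pmf `p(q) p(x,y1,y2) p(u1|y1,q) p(u2|y2,q)` on `Q × X × Y1 × Y2 × U1 × U2`. -/
def ceoJoint {X Y1 Y2 Q U1 U2 : Type*} (src : X × Y1 × Y2 → ℝ) (pq : Q → ℝ)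
    (k1 : Q → Y1 → U1 → ℝ) (k2 : Q → Y2 → U2 → ℝ) : Q × X × Y1 × Y2 × U1 × U2 → ℝ :=
  fun z => pq z.1 * src (z.2.1, z.2.2.1, z.2.2.2.1) *
    k1 z.1 z.2.2.1 z.2.2.2.2.1 * k2 z.1 z.2.2.2.1 z.2.2.2.2.2

/-- Pmf of `n` i.i.d. copies of a pair source. -/
def iidPmf {Y1 Y2 : Type*} (src : Y1 × Y2 → ℝ) (n : ℕ) :
    (Fin n → Y1) × (Fin n → Y2) → ℝ :=
  fun y => ∏ j, src (y.1 j, y.2 j)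

/-- Pmf of `n` i.i.d. copies of a triple source. -/
def ceoIidPmf {X Y1 Y2 : Type*} (src : X × Y1 × Y2 → ℝ) (n : ℕ) :
    (Fin n → X) × (Fin n → Y1) × (Fin n → Y2) → ℝ :=
  fun z => ∏ j, src (z.1 j, z.2.1 j, z.2.2 j)


set_option linter.unusedSectionVars false

section Helpers

variable {Ω α β γ : Type*} [Fintype Ω] [Fintype α] [Fintype β] [Fintype γ]

lemma pr_nonneg (p : Ω → ℝ) (hp : ∀ ω, 0 ≤ p ω) (A : Ω → α) (a : α) : 0 ≤ pr p A a := by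
  apply Finset.sum_nonneg; intro ω _; split <;> simp [hp ω]

lemma pr_sum_fst (p : Ω → ℝ) (A : Ω → α) (B : Ω → β) (b : β) :
    ∑ a, pr p (fun ω => (A ω, B ω)) (a, b) = pr p B b := by
  unfold pr
  rw [Finset.sum_comm]
  refine Finset.sum_congr rfl fun ω _ => ?_
  by_cases h : B ω = b <;> simp [Prod.ext_iff, h]

lemma pr_sum_mid (p : Ω → ℝ) (A : Ω → α) (B : Ω → β) (C : Ω → γ) (a : α) (c : γ) :
    ∑ b, pr p (fun ω => (A ω, B ω, C ω)) (a, b, c) = pr p (fun ω => (A ω, C ω)) (a, c) := by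
  unfold pr
  rw [Finset.sum_comm]
  refine Finset.sum_congr rfl fun ω _ => ?_
  by_cases h : A ω = a ∧ C ω = c
  · simp [Prod.ext_iff, h.1, h.2]
  · simp only [Prod.ext_iff, if_neg h]
    apply Finset.sum_eq_zero; intro b _
    rw [if_neg]; tauto

lemma pr_comp_eq_zero (p : Ω → ℝ) (T : Ω → α) (φ : α → β) (b : β) (hb : ∀ a, φ a ≠ b) :
    pr p (fun ω => φ (T ω)) b = 0 := by
  apply Finset.sum_eq_zero; intro ω _; rw [if_neg (hb (T ω))]

lemma pr_comp_apply (p : Ω → ℝ) (T : Ω → α) (φ : α → β) (hφ : Function.Injective φ) (a : α) :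
    pr p (fun ω => φ (T ω)) (φ a) = pr p T a := by
  refine Finset.sum_congr rfl fun ω _ => ?_
  simp [hφ.eq_iff]

lemma ent_comp (p : Ω → ℝ) (T : Ω → α) (φ : α → β) (hφ : Function.Injective φ) :
    ent p (fun ω => φ (T ω)) = ent p T := by
  unfold ent
  congr 1
  calc ∑ b : β, pr p (fun ω => φ (T ω)) b * Real.logb 2 (pr p (fun ω => φ (T ω)) b)
      = ∑ b ∈ Finset.univ.image φ, pr p (fun ω => φ (T ω)) b * Real.logb 2 (pr p (fun ω => φ (T ω)) b) := by
        symm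
        apply Finset.sum_subset (Finset.subset_univ _)
        intro b _ hb
        rw [pr_comp_eq_zero p T φ b (fun a h => hb (Finset.mem_image.2 ⟨a, Finset.mem_univ a, h⟩))]
        simp
    _ = ∑ a : α, pr p (fun ω => φ (T ω)) (φ a) * Real.logb 2 (pr p (fun ω => φ (T ω)) (φ a)) :=
        Finset.sum_image (fun x _ y _ h => hφ h)
    _ = ∑ a : α, pr p T a * Real.logb 2 (pr p T a) := by
        refine Finset.sum_congr rfl fun a _ => ?_
        rw [pr_comp_apply p T φ hφ]

lemma pr_comp_sum (p : Ω → ℝ) (T : Ω → α) (φ : α → β) (b : β) :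
    pr p (fun ω => φ (T ω)) b = ∑ a, if φ a = b then pr p T a else 0 := by
  unfold pr
  have h1 : ∀ a : α, (if φ a = b then ∑ ω, if T ω = a then p ω else 0 else 0)
      = ∑ ω, if φ a = b ∧ T ω = a then p ω else 0 := by
    intro a; split <;> rename_i h <;> simp [h]
  simp only [h1]
  rw [Finset.sum_comm]
  refine Finset.sum_congr rfl fun ω _ => ?_
  rw [Finset.sum_eq_single (T ω)] <;> simp +contextual [eq_comm]

lemma sum3_comm (g : α → β → γ → ℝ) :
    ∑ a, ∑ b, ∑ c, g a b c = ∑ c, ∑ b, ∑ a, g a b c :=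
  calc ∑ a, ∑ b, ∑ c, g a b c = ∑ b, ∑ a, ∑ c, g a b c := Finset.sum_comm
  _ = ∑ b, ∑ c, ∑ a, g a b c := Finset.sum_congr rfl fun _ _ => Finset.sum_comm
  _ = ∑ c, ∑ b, ∑ a, g a b c := Finset.sum_comm

lemma condIndep_ent (p : Ω → ℝ) (hp : ∀ ω, 0 ≤ p ω) (A : Ω → α) (B : Ω → β) (C : Ω → γ)
    (hCI : ∀ a b c, pr p (fun ω => (A ω, B ω, C ω)) (a, b, c) * pr p C c =
      pr p (fun ω => (A ω, C ω)) (a, c) * pr p (fun ω => (B ω, C ω)) (b, c)) :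
    ent p (fun ω => (A ω, B ω, C ω)) + ent p C =
      ent p (fun ω => (A ω, C ω)) + ent p (fun ω => (B ω, C ω)) := by
  set r : α → β → γ → ℝ := fun a b c => pr p (fun ω => (A ω, B ω, C ω)) (a, b, c) with hr
  set r1 : α → γ → ℝ := fun a c => pr p (fun ω => (A ω, C ω)) (a, c) with hr1d
  set r2 : β → γ → ℝ := fun b c => pr p (fun ω => (B ω, C ω)) (b, c) with hr2d
  set q : γ → ℝ := fun c => pr p C c with hqd
  have hrn : ∀ a b c, 0 ≤ r a b c := fun a b c => pr_nonneg p hp _ _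
  have hr1 : ∀ a c, ∑ b, r a b c = r1 a c := fun a c => pr_sum_mid p A B C a c
  have hr2 : ∀ b c, ∑ a, r a b c = r2 b c := fun b c =>
    pr_sum_fst p A (fun ω => (B ω, C ω)) (b, c)
  have hq : ∀ c, ∑ b, ∑ a, r a b c = q c := by
    intro c
    simp only [hr2]
    exact pr_sum_fst p B C c
  have hqr : ∀ a b c, r a b c ≤ q c := by
    intro a b c
    rw [← hq c]
    calc r a b c ≤ ∑ a', r a' b c := Finset.single_le_sum (fun a' _ => hrn a' b c) (Finset.mem_univ a)
    _ ≤ ∑ b', ∑ a', r a' b' c := Finset.single_le_sum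
        (fun b' _ => Finset.sum_nonneg fun a' _ => hrn a' b' c) (Finset.mem_univ b)
  have key : ∀ a b c, r a b c * (Real.logb 2 (r a b c) + Real.logb 2 (q c)) =
      r a b c * (Real.logb 2 (r1 a c) + Real.logb 2 (r2 b c)) := by
    intro a b c
    rcases eq_or_lt_of_le (hrn a b c) with h | h
    · rw [← h]; ring
    · have hq0 : 0 < q c := lt_of_lt_of_le h (hqr a b c)
      have hprod : r a b c * q c = r1 a c * r2 b c := hCI a b c
      have h12 : 0 < r1 a c * r2 b c := by rw [← hprod]; positivity
      have h1n : 0 ≤ r1 a c := pr_nonneg p hp _ _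
      have h2n : 0 ≤ r2 b c := pr_nonneg p hp _ _
      have h1 : 0 < r1 a c := by
        rcases eq_or_lt_of_le h1n with h' | h'
        · exfalso; nlinarith
        · exact h'
      have h2 : 0 < r2 b c := by
        rcases eq_or_lt_of_le h2n with h' | h'
        · exfalso; nlinarith
        · exact h'
      congr 1
      have := congrArg (Real.logb 2) hprod
      rw [Real.logb_mul (ne_of_gt h) (ne_of_gt hq0), Real.logb_mul (ne_of_gt h1) (ne_of_gt h2)] at this
      linarith
  have e3 : ent p (fun ω => (A ω, B ω, C ω)) = -∑ a, ∑ b, ∑ c, r a b c * Real.logb 2 (r a b c) := by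
    unfold ent; congr 1
    rw [Fintype.sum_prod_type]
    exact Finset.sum_congr rfl fun a _ => Fintype.sum_prod_type _
  have eAC : ent p (fun ω => (A ω, C ω)) = -∑ a, ∑ c, r1 a c * Real.logb 2 (r1 a c) := by
    unfold ent; congr 1
    exact Fintype.sum_prod_type _
  have eBC : ent p (fun ω => (B ω, C ω)) = -∑ b, ∑ c, r2 b c * Real.logb 2 (r2 b c) := by
    unfold ent; congr 1
    exact Fintype.sum_prod_type _
  have eC : ent p C = -∑ c, q c * Real.logb 2 (q c) := rfl
  have hsum : ∑ a, ∑ b, ∑ c, r a b c * (Real.logb 2 (r a b c) + Real.logb 2 (q c)) =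
      ∑ a, ∑ b, ∑ c, r a b c * (Real.logb 2 (r1 a c) + Real.logb 2 (r2 b c)) := by
    refine Finset.sum_congr rfl fun a _ => Finset.sum_congr rfl fun b _ =>
      Finset.sum_congr rfl fun c _ => key a b c
  simp only [mul_add, Finset.sum_add_distrib] at hsum
  have P2 : ∑ a, ∑ b, ∑ c, r a b c * Real.logb 2 (q c) = ∑ c, q c * Real.logb 2 (q c) := by
    rw [sum3_comm]
    refine Finset.sum_congr rfl fun c _ => ?_
    simp only [← Finset.sum_mul]
    rw [hq c]
  have P3 : ∑ a, ∑ b, ∑ c, r a b c * Real.logb 2 (r1 a c) =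
      ∑ a, ∑ c, r1 a c * Real.logb 2 (r1 a c) := by
    refine Finset.sum_congr rfl fun a _ => ?_
    rw [Finset.sum_comm]
    refine Finset.sum_congr rfl fun c _ => ?_
    rw [← Finset.sum_mul, hr1 a c]
  have P4 : ∑ a, ∑ b, ∑ c, r a b c * Real.logb 2 (r2 b c) =
      ∑ b, ∑ c, r2 b c * Real.logb 2 (r2 b c) := by
    rw [Finset.sum_comm]
    refine Finset.sum_congr rfl fun b _ => ?_
    rw [Finset.sum_comm]
    refine Finset.sum_congr rfl fun c _ => ?_
    rw [← Finset.sum_mul, hr2 b c]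
  rw [e3, eAC, eBC, eC]
  linarith

variable {δ ε : Type*} [Fintype δ] [Fintype ε]

lemma pr_comp_pair (p : Ω → ℝ) (A : Ω → α) (C : Ω → γ) (g : α → δ) (d : δ) (c : γ) :
    pr p (fun ω => (g (A ω), C ω)) (d, c) =
      ∑ a, if g a = d then pr p (fun ω => (A ω, C ω)) (a, c) else 0 := by
  refine Eq.trans (pr_comp_sum p (fun ω => (A ω, C ω)) (fun t => (g t.1, t.2)) (d, c)) ?_
  rw [Fintype.sum_prod_type]
  refine Finset.sum_congr rfl fun a _ => ?_
  by_cases hh : g a = d <;> simp [hh, Prod.ext_iff]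

lemma pr_comp_triple (p : Ω → ℝ) (A : Ω → α) (B : Ω → β) (C : Ω → γ)
    (g : α → δ) (h : β → ε) (d : δ) (e : ε) (c : γ) :
    pr p (fun ω => (g (A ω), h (B ω), C ω)) (d, e, c) =
      ∑ a, ∑ b, if g a = d ∧ h b = e then pr p (fun ω => (A ω, B ω, C ω)) (a, b, c) else 0 := by
  refine Eq.trans (pr_comp_sum p (fun ω => (A ω, B ω, C ω))
    (fun t => (g t.1, h t.2.1, t.2.2)) (d, e, c)) ?_
  rw [Fintype.sum_prod_type]
  refine Finset.sum_congr rfl fun a _ => ?_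
  rw [Fintype.sum_prod_type]
  refine Finset.sum_congr rfl fun b _ => ?_
  by_cases h1 : g a = d <;> by_cases h2 : h b = e <;> simp [h1, h2, Prod.ext_iff]

lemma condIndep_comp (p : Ω → ℝ) (A : Ω → α) (B : Ω → β) (C : Ω → γ)
    (g : α → δ) (h : β → ε)
    (hCI : ∀ a b c, pr p (fun ω => (A ω, B ω, C ω)) (a, b, c) * pr p C c =
      pr p (fun ω => (A ω, C ω)) (a, c) * pr p (fun ω => (B ω, C ω)) (b, c)) :
    ∀ d e c, pr p (fun ω => (g (A ω), h (B ω), C ω)) (d, e, c) * pr p C c =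
      pr p (fun ω => (g (A ω), C ω)) (d, c) * pr p (fun ω => (h (B ω), C ω)) (e, c) := by
  intro d e c
  rw [pr_comp_triple p A B C g h d e c, pr_comp_pair p A C g d c, pr_comp_pair p B C h e c]
  rw [Fintype.sum_mul_sum]
  rw [Finset.sum_mul]
  refine Finset.sum_congr rfl fun a _ => ?_
  rw [Finset.sum_mul]
  refine Finset.sum_congr rfl fun b _ => ?_
  by_cases h1 : g a = d <;> by_cases h2 : h b = e <;>
    simp [h1, h2, hCI a b c]

end Helpers

/-- **Mutual information decomposition for conditionally independent observations**: if
`Y1 ⟂ Y2 | X` and `F1 = g1(Y1)`, `F2 = g2(Y2)`, then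
`I(Y1,Y2; F1,F2) = I(X; F1,F2) + I(F1; Y1 | X) + I(F2; Y2 | X)` and
`I(Y1; F1 | F2) = I(X; F1 | F2) + I(F1; Y1 | X)`. -/
theorem mutInfo_decomposition {Ω X A1 A2 F1 F2 : Type}
    [Fintype Ω] [Fintype X] [Fintype A1] [Fintype A2] [Fintype F1] [Fintype F2]
    (p : Ω → ℝ) (hp : IsPmf p)
    (Xv : Ω → X) (Y1v : Ω → A1) (Y2v : Ω → A2)
    (hMarkov : CondIndep p Y1v Y2v Xv)
    (g1 : A1 → F1) (g2 : A2 → F2) :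
    (mutInfo p (fun ω => (Y1v ω, Y2v ω)) (fun ω => (g1 (Y1v ω), g2 (Y2v ω))) =
      mutInfo p Xv (fun ω => (g1 (Y1v ω), g2 (Y2v ω))) +
        condMutInfo p (fun ω => g1 (Y1v ω)) Y1v Xv +
        condMutInfo p (fun ω => g2 (Y2v ω)) Y2v Xv) ∧
    (condMutInfo p Y1v (fun ω => g1 (Y1v ω)) (fun ω => g2 (Y2v ω)) =
      condMutInfo p Xv (fun ω => g1 (Y1v ω)) (fun ω => g2 (Y2v ω)) +
        condMutInfo p (fun ω => g1 (Y1v ω)) Y1v Xv) := by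
  have hE : ent p (fun ω => (g1 (Y1v ω), g2 (Y2v ω), Xv ω)) + ent p Xv =
      ent p (fun ω => (g1 (Y1v ω), Xv ω)) + ent p (fun ω => (g2 (Y2v ω), Xv ω)) :=
    condIndep_ent p hp.1 (fun ω => g1 (Y1v ω)) (fun ω => g2 (Y2v ω)) Xv
      (condIndep_comp p Y1v Y2v Xv g1 g2 hMarkov)
  have hre1 : ent p (fun ω => (Xv ω, g1 (Y1v ω), g2 (Y2v ω))) =
      ent p (fun ω => (g1 (Y1v ω), g2 (Y2v ω), Xv ω)) :=
    ent_comp p (fun ω => (g1 (Y1v ω), g2 (Y2v ω), Xv ω))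
      (fun t => (t.2.2, t.1, t.2.1))
      (fun x y h => by simp only [Prod.ext_iff] at h ⊢; tauto)
  have hre2 : ent p (fun ω => (Xv ω, g2 (Y2v ω))) =
      ent p (fun ω => (g2 (Y2v ω), Xv ω)) :=
    ent_comp p (fun ω => (g2 (Y2v ω), Xv ω)) (fun t => (t.2, t.1))
      (fun x y h => by simp only [Prod.ext_iff] at h ⊢; tauto)
  have h1 : ent p (fun ω => ((Y1v ω, Y2v ω), g1 (Y1v ω), g2 (Y2v ω))) =
      ent p (fun ω => (Y1v ω, Y2v ω)) :=
    ent_comp p (fun ω => (Y1v ω, Y2v ω)) (fun t => (t, g1 t.1, g2 t.2))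
      (fun x y h => congrArg Prod.fst h)
  have h2 : ent p (fun ω => (g1 (Y1v ω), Y1v ω, Xv ω)) =
      ent p (fun ω => (Y1v ω, Xv ω)) :=
    ent_comp p (fun ω => (Y1v ω, Xv ω)) (fun t => (g1 t.1, t.1, t.2))
      (fun x y h => by simp only [Prod.ext_iff] at h ⊢; tauto)
  have h2' : ent p (fun ω => (g2 (Y2v ω), Y2v ω, Xv ω)) =
      ent p (fun ω => (Y2v ω, Xv ω)) :=
    ent_comp p (fun ω => (Y2v ω, Xv ω)) (fun t => (g2 t.1, t.1, t.2))
      (fun x y h => by simp only [Prod.ext_iff] at h ⊢; tauto)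
  have h3 : ent p (fun ω => (Y1v ω, g1 (Y1v ω), g2 (Y2v ω))) =
      ent p (fun ω => (Y1v ω, g2 (Y2v ω))) :=
    ent_comp p (fun ω => (Y1v ω, g2 (Y2v ω))) (fun t => (t.1, g1 t.1, t.2))
      (fun x y h => by simp only [Prod.ext_iff] at h ⊢; tauto)
  unfold mutInfo condMutInfo
  constructor <;> linarith [hE, hre1, hre2, h1, h2, h2', h3]

end
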